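/- Let L be a PG-lattice and M be a faithful multiplication PG-lattice L-module with I_M compact. If a proper element N ∈ M is pseudo-primary, then rad(N) is a prime element of M. -/

import Mathlib

open CompleteLattice

universe u v

/-- A multiplicative lattice: a complete lattice with a commutative, associative
multiplication distributing over arbitrary joins, whose greatest element `⊤` is the
multiplicative identity `1`.  Following the standing assumptions of the paper, we also
require that the lattice is compactly generated, that `1` is compact and that finite
products of compact elements are compact. -/
class MultiplicativeLattice (L : Type u) extends CompleteLattice L, CommMonoid L where
  mul_sSup : ∀ (a : L) (S : Set L), a * sSup S = ⨆ b ∈ S, a * b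
  one_eq_top : (1 : L) = ⊤
  compactlyGenerated : ∀ a : L, a = sSup {c : L | IsCompactElement c ∧ c ≤ a}
  top_compact : IsCompactElement (⊤ : L)
  mul_compact : ∀ a b : L, IsCompactElement a → IsCompactElement b →
    IsCompactElement (a * b)

/-- A lattice module `M` over a multiplicative lattice `L`. -/
class LatticeModule (L : Type u) [MultiplicativeLattice L] (M : Type v)
    extends CompleteLattice M, SMul L M where
  sSup_smul : ∀ (S : Set L) (A : M), (SupSet.sSup S : L) • A = ⨆ a ∈ S, a • A
  smul_sSup : ∀ (a : L) (S : Set M), a • (sSup S) = ⨆ B ∈ S, a • B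
  mul_smul : ∀ (a b : L) (A : M), (a * b) • A = a • b • A
  one_smul : ∀ A : M, (1 : L) • A = A
  bot_smul : ∀ A : M, (⊥ : L) • A = (⊥ : M)

section LDefs

variable {L : Type u} [MultiplicativeLattice L]

/-- The residual `(a : b)` in `L`. -/
def lcolon (a b : L) : L := sSup {x : L | x * b ≤ a}

/-- The radical `√a` of an element of `L`. -/
def lrad (a : L) : L :=
  sSup {x : L | IsCompactElement x ∧ ∃ n : ℕ, 0 < n ∧ x ^ n ≤ a}

/-- A prime element of `L`: proper, and `a * b ≤ p` implies `a ≤ p` or `b ≤ p`. -/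
def IsPrimeL (p : L) : Prop :=
  p < 1 ∧ ∀ a b : L, a * b ≤ p → a ≤ p ∨ b ≤ p

/-- A primary element of `L`: proper, and for compact `a, b`, `a * b ≤ q` implies
`a ≤ q` or `b ^ n ≤ q` for some positive `n`. -/
def IsPrimaryL (q : L) : Prop :=
  q < 1 ∧ ∀ a b : L, IsCompactElement a → IsCompactElement b → a * b ≤ q →
    a ≤ q ∨ ∃ n : ℕ, 0 < n ∧ b ^ n ≤ q

/-- A principal element of `L` (meet principal and join principal). -/
def IsPrincipalElemL (e : L) : Prop :=
  (∀ a b : L, a ⊓ b * e = (lcolon a e ⊓ b) * e) ∧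
  (∀ a b : L, lcolon (a * e ⊔ b) e = lcolon b e ⊔ a)

end LDefs

/-- `L` is a PG-lattice: every element is a join of principal elements. -/
def IsPGLattice (L : Type u) [MultiplicativeLattice L] : Prop :=
  ∀ a : L, a = sSup {p : L | IsPrincipalElemL p ∧ p ≤ a}

section MDefs

variable (L : Type u) {M : Type v} [MultiplicativeLattice L] [LatticeModule L M]

/-- The residual `(A : B) ∈ L` of two elements of `M`. -/
def colon (A B : M) : L := sSup {x : L | x • B ≤ A}

/-- The residual `(N : a) ∈ M` of an element of `M` by an element of `L`. -/
def mcolon (N : M) (a : L) : M := sSup {X : M | a • X ≤ N}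

/-- A prime element of `M`. -/
def IsPrimeM (N : M) : Prop :=
  N < ⊤ ∧ ∀ (a : L) (X : M), a • X ≤ N → X ≤ N ∨ a • (⊤ : M) ≤ N

/-- A primary element of `M`. -/
def IsPrimaryM (N : M) : Prop :=
  N < ⊤ ∧ ∀ (a : L) (X : M), a • X ≤ N →
    X ≤ N ∨ ∃ n : ℕ, 0 < n ∧ (a ^ n) • (⊤ : M) ≤ N

/-- The radical `rad N` of an element of `M`: the meet of all prime elements above it. -/
def mrad (N : M) : M := sInf {P : M | IsPrimeM L P ∧ N ≤ P}

/-- A pseudo-primary element of `M`. -/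
def IsPseudoPrimary (N : M) : Prop :=
  N < ⊤ ∧ ∀ (a : L) (X : M), a • X ≤ N → a ≤ colon L N ⊤ ∨ X ≤ mrad L N

/-- A classical prime element of `M`. -/
def IsClassicalPrime (N : M) : Prop :=
  N < ⊤ ∧ ∀ (a b : L) (K : M), (a * b) • K ≤ N → a • K ≤ N ∨ b • K ≤ N

/-- A pseudo-classical primary element of `M`. -/
def IsPseudoClassicalPrimary (N : M) : Prop :=
  N < ⊤ ∧ ∀ (a b : L) (K : M), (a * b) • K ≤ N → a • K ≤ N ∨ b • K ≤ mrad L N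

/-- A principal element of `M` (meet principal and join principal). -/
def IsPrincipalElem (N : M) : Prop :=
  (∀ (b : L) (B : M), (b ⊓ colon L B N) • N = b • N ⊓ B) ∧
  (∀ (b : L) (B : M), b ⊔ colon L B N = colon L (b • N ⊔ B) N)

/-- The saturation `S_p(N)` of `N` with respect to `p`. -/
def saturation (N : M) (p : L) : M :=
  sSup {X : M | ∃ c : L, ¬ c ≤ p ∧ c • X ≤ N}

variable (M)

/-- `M` is a PG-lattice `L`-module. -/
def IsPGModule : Prop := ∀ N : M, N = sSup {P : M | IsPrincipalElem L P ∧ P ≤ N}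

/-- `M` is a multiplication lattice `L`-module. -/
def IsMultiplicationModule : Prop := ∀ N : M, ∃ a : L, N = a • (⊤ : M)

/-- `M` is a faithful `L`-module. -/
def IsFaithful : Prop := colon L (⊥ : M) (⊤ : M) = (⊥ : L)

/-- `M` is a CG (compactly generated) lattice `L`-module. -/
def IsCGModule : Prop := ∀ N : M, N = sSup {K : M | IsCompactElement K ∧ K ≤ N}

end MDefs

section AuxLemmas

variable {L : Type u} {M : Type v} [MultiplicativeLattice L] [LatticeModule L M]

lemma aux_le_one (a : L) : a ≤ 1 := by rw [MultiplicativeLattice.one_eq_top]; exact le_top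

lemma aux_mul_sup (a b c : L) : a * (b ⊔ c) = a * b ⊔ a * c := by
  have h := MultiplicativeLattice.mul_sSup a {b, c}
  rw [sSup_pair] at h
  rw [h, iSup_pair]

lemma aux_mul_le_mul_left (a : L) {b c : L} (h : b ≤ c) : a * b ≤ a * c := by
  have : a * c = a * b ⊔ a * c := by rw [← aux_mul_sup, sup_eq_right.2 h]
  rw [this]; exact le_sup_left

lemma aux_mul_le_mul {a b c d : L} (h1 : a ≤ b) (h2 : c ≤ d) : a * c ≤ b * d := by
  calc a * c ≤ a * d := aux_mul_le_mul_left a h2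
  _ = d * a := mul_comm _ _
  _ ≤ d * b := aux_mul_le_mul_left d h1
  _ = b * d := mul_comm _ _

lemma aux_mul_le_right (a b : L) : a * b ≤ b := by
  calc a * b ≤ 1 * b := aux_mul_le_mul (aux_le_one a) le_rfl
  _ = b := one_mul b

lemma aux_sup_smul (a b : L) (A : M) : (a ⊔ b) • A = a • A ⊔ b • A := by
  have h := LatticeModule.sSup_smul {a, b} A
  rw [sSup_pair] at h
  rw [h, iSup_pair]

lemma aux_smul_sup (a : L) (A B : M) : a • (A ⊔ B) = a • A ⊔ a • B := by
  have h := LatticeModule.smul_sSup a {A, B}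
  rw [sSup_pair] at h
  rw [h, iSup_pair]

lemma aux_smul_mono_left {a b : L} (h : a ≤ b) (A : M) : a • A ≤ b • A := by
  have : b • A = a • A ⊔ b • A := by rw [← aux_sup_smul, sup_eq_right.2 h]
  rw [this]; exact le_sup_left

lemma aux_smul_mono_right (a : L) {A B : M} (h : A ≤ B) : a • A ≤ a • B := by
  have : a • B = a • A ⊔ a • B := by rw [← aux_smul_sup, sup_eq_right.2 h]
  rw [this]; exact le_sup_left

lemma aux_smul_le (a : L) (A : M) : a • A ≤ A := by
  calc a • A ≤ (1 : L) • A := aux_smul_mono_left (aux_le_one a) A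
  _ = A := LatticeModule.one_smul A

lemma colon_smul_le (A B : M) : (colon L A B) • B ≤ A := by
  rw [colon, LatticeModule.sSup_smul]
  exact iSup₂_le fun x hx => hx

lemma le_colon {x : L} {A B : M} : x ≤ colon L A B ↔ x • B ≤ A := by
  constructor
  · intro h; exact le_trans (aux_smul_mono_left h B) (colon_smul_le A B)
  · intro h; exact le_sSup h

lemma colon_top_smul (hmul : IsMultiplicationModule L M) (X : M) :
    (colon L X ⊤) • (⊤ : M) = X := by
  obtain ⟨c, hc⟩ := hmul X
  refine le_antisymm (colon_smul_le X ⊤) ?_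
  have hcX : c ≤ colon L X ⊤ := le_colon.2 (le_of_eq hc.symm)
  calc X = c • ⊤ := hc
  _ ≤ (colon L X ⊤) • ⊤ := aux_smul_mono_left hcX ⊤

end AuxLemmas
section CancelLemmas

variable {L : Type u} {M : Type v} [MultiplicativeLattice L] [LatticeModule L M]

lemma aux_prod_le_one (F : Finset M) (g : M → L) : (∏ E ∈ F, g E) ≤ 1 := aux_le_one _

lemma aux_prod_le_of_mem {F : Finset M} (g : M → L) {E : M} (hE : E ∈ F) :
    (∏ E' ∈ F, g E') ≤ g E := by
  classical
  rw [← Finset.mul_prod_erase F g hE]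
  calc g E * ∏ E' ∈ F.erase E, g E' ≤ g E * 1 :=
    aux_mul_le_mul_left _ (aux_prod_le_one _ _)
  _ = g E := mul_one _

lemma aux_prod_sup_le (F : Finset M) (t : L) (g : M → L) :
    (∏ E ∈ F, (t ⊔ g E)) ≤ t ⊔ ∏ E ∈ F, g E := by
  classical
  induction F using Finset.induction with
  | empty => simp
  | insert _ _ hE ih =>
    rename_i a s
    rw [Finset.prod_insert hE, Finset.prod_insert hE]
    calc (t ⊔ g a) * ∏ E ∈ s, (t ⊔ g E) ≤ (t ⊔ g a) * (t ⊔ ∏ E ∈ s, g E) :=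
      aux_mul_le_mul_left _ ih
    _ = (t ⊔ g a) * t ⊔ (t ⊔ g a) * ∏ E ∈ s, g E := aux_mul_sup _ _ _
    _ = (t ⊔ g a) * t ⊔ ((t * ∏ E ∈ s, g E) ⊔ g a * ∏ E ∈ s, g E) := by
      rw [mul_comm (t ⊔ g a) (∏ E ∈ s, g E), aux_mul_sup, mul_comm (∏ E ∈ s, g E) t,
        mul_comm (∏ E ∈ s, g E) (g a)]
    _ ≤ t ⊔ g a * ∏ E ∈ s, g E := by
      refine sup_le (le_sup_of_le_left (aux_mul_le_right _ _)) (sup_le ?_ le_sup_right)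
      exact le_sup_of_le_left (by rw [mul_comm]; exact aux_mul_le_right _ _)

lemma aux_cancel (hfaith : IsFaithful L M) (hmul : IsMultiplicationModule L M)
    (hPGM : IsPGModule L M) (hcomp : IsCompactElement (⊤ : M)) :
    ∀ a b : L, a • (⊤ : M) ≤ b • (⊤ : M) → a ≤ b := by
  classical
  -- a finite set of principal elements joining to ⊤
  obtain ⟨F, hFsub, hFtop⟩ := (isCompactElement_iff_exists_le_sSup_of_le_sSup M ⊤).1 hcomp {P : M | IsPrincipalElem L P ∧ P ≤ ⊤}
    (le_of_eq (hPGM ⊤))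
  have hFsup : sSup (↑F : Set M) = ⊤ := by
    refine le_antisymm le_top ?_
    rw [← Finset.sup_id_eq_sSup]; exact hFtop
  have hprin : ∀ E ∈ F, IsPrincipalElem L E := fun E hE => (hFsub hE).1
  set q : M → L := fun E => colon L E ⊤ with hq
  set t : L := sSup (q '' ↑F) with ht
  have hqE : ∀ E ∈ F, (q E) • (⊤ : M) = E := fun E _ => colon_top_smul hmul E
  have httop : t • (⊤ : M) = ⊤ := by
    rw [ht, LatticeModule.sSup_smul, iSup_image]
    calc ⨆ E ∈ (↑F : Set M), (q E) • (⊤ : M) = ⨆ E ∈ (↑F : Set M), E := by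
          apply iSup_congr; intro E; apply iSup_congr; intro hE; exact hqE E hE
    _ = sSup (↑F : Set M) := (sSup_eq_iSup).symm
    _ = ⊤ := hFsup
  have hcq : ∀ E ∈ F, colon L (⊥ : M) E * q E ≤ ⊥ := by
    intro E hE
    have h1 : (colon L (⊥ : M) E * q E) • (⊤ : M) ≤ ⊥ := by
      rw [LatticeModule.mul_smul, hqE E hE]
      exact colon_smul_le ⊥ E
    have := le_colon.2 h1
    rwa [hfaith] at this
  -- t = 1
  have ht1 : t = 1 := by
    have hone : ∀ E ∈ F, t ⊔ colon L (⊥ : M) E = 1 := by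
      intro E hE
      have htE : t • E = E := by
        conv_lhs => rw [← hqE E hE]
        rw [← LatticeModule.mul_smul, mul_comm, LatticeModule.mul_smul, httop, hqE E hE]
      have hjp := (hprin E hE).2 t ⊥
      rw [htE, sup_bot_eq] at hjp
      refine le_antisymm (aux_le_one _) ?_
      rw [hjp]
      exact le_colon.2 (le_of_eq (LatticeModule.one_smul E))
    have hprod1 : (∏ E ∈ F, (t ⊔ colon L (⊥ : M) E)) = 1 :=
      Finset.prod_eq_one hone
    have hcbot : (∏ E ∈ F, colon L (⊥ : M) E) ≤ ⊥ := by
      have h1 : (∏ E ∈ F, colon L (⊥ : M) E) • (⊤ : M) ≤ ⊥ := by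
        rw [← hFsup, LatticeModule.smul_sSup]
        refine iSup₂_le fun E hE => ?_
        calc (∏ E' ∈ F, colon L (⊥ : M) E') • E ≤ (colon L (⊥ : M) E) • E :=
          aux_smul_mono_left (aux_prod_le_of_mem _ hE) E
        _ ≤ ⊥ := colon_smul_le ⊥ E
      have := le_colon.2 h1
      rwa [hfaith] at this
    refine le_antisymm (aux_le_one _) ?_
    calc (1 : L) = ∏ E ∈ F, (t ⊔ colon L (⊥ : M) E) := hprod1.symm
    _ ≤ t ⊔ ∏ E ∈ F, colon L (⊥ : M) E := aux_prod_sup_le F t _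
    _ ≤ t ⊔ ⊥ := sup_le_sup_left hcbot t
    _ = t := sup_bot_eq t
  -- cancellation
  intro a b hab
  have hkey : ∀ E ∈ F, a * q E ≤ b := by
    intro E hE
    have haE : a • E ≤ b • E := by
      conv_lhs => rw [← hqE E hE]
      conv_rhs => rw [← hqE E hE]
      rw [← LatticeModule.mul_smul, ← LatticeModule.mul_smul, mul_comm a, mul_comm b,
        LatticeModule.mul_smul, LatticeModule.mul_smul]
      exact aux_smul_mono_right _ hab
    have hjp := (hprin E hE).2 b ⊥
    rw [sup_bot_eq] at hjp
    have haC : a ≤ b ⊔ colon L (⊥ : M) E := by rw [hjp]; exact le_colon.2 haE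
    calc a * q E ≤ (b ⊔ colon L (⊥ : M) E) * q E := aux_mul_le_mul haC le_rfl
    _ = b * q E ⊔ colon L (⊥ : M) E * q E := by
      rw [mul_comm, aux_mul_sup, mul_comm (q E) b, mul_comm (q E)]
    _ ≤ b ⊔ ⊥ := sup_le_sup (by rw [mul_comm]; exact aux_mul_le_right _ _) (hcq E hE)
    _ = b := sup_bot_eq b
  calc a = a * 1 := (mul_one a).symm
  _ = a * t := by rw [ht1]
  _ = a * sSup (q '' ↑F) := by rw [ht]
  _ ≤ b := by
    rw [MultiplicativeLattice.mul_sSup]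
    refine iSup₂_le ?_
    rintro x ⟨E, hE, rfl⟩
    exact hkey E hE

end CancelLemmas
section PrimeLemmas

variable {L : Type u} {M : Type v} [MultiplicativeLattice L] [LatticeModule L M]

lemma aux_exists_prime (hcomp : IsCompactElement (⊤ : M)) {N : M} (hN : N < ⊤) :
    ∃ P : M, IsPrimeM L P ∧ N ≤ P := by
  obtain ⟨m, hNm, hmax⟩ := zorn_le_nonempty₀ {X : M | N ≤ X ∧ X ≠ ⊤}
    (fun c hcs hchain y hy => by
      refine ⟨sSup c, ⟨le_trans (hcs hy).1 (le_sSup hy), ?_⟩, fun z hz => le_sSup hz⟩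
      intro htop
      obtain ⟨z, hzc, hz⟩ := (CompleteLattice.isCompactElement_iff_le_of_directed_sSup_le
        M (⊤ : M)).1 hcomp c ⟨y, hy⟩ hchain.directedOn (le_of_eq htop.symm)
      exact (hcs hzc).2 (le_antisymm le_top hz))
    N ⟨le_rfl, hN.ne⟩
  refine ⟨m, ⟨lt_of_le_of_ne le_top hmax.prop.2, ?_⟩, hNm⟩
  intro a X haX
  by_cases hX : X ≤ m
  · exact Or.inl hX
  · right
    have hm : m ⊔ X = ⊤ := by
      by_contra hne
      have : m ⊔ X ≤ m := hmax.2 ⟨le_trans hmax.prop.1 le_sup_left, hne⟩ le_sup_left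
      exact hX (le_trans le_sup_right this)
    rw [← hm, aux_smul_sup]
    exact sup_le (aux_smul_le a m) haX

lemma aux_colon_prime {P : M} (hP : IsPrimeM L P) : IsPrimeL (colon L P ⊤) := by
  constructor
  · refine lt_of_le_of_ne (aux_le_one _) fun h => ?_
    have : (⊤ : M) ≤ P := by
      have := le_colon.1 (le_of_eq h.symm)
      rwa [LatticeModule.one_smul] at this
    exact hP.1.ne (le_antisymm le_top this)
  · intro a b hab
    have h1 : a • (b • (⊤ : M)) ≤ P := by
      rw [← LatticeModule.mul_smul]; exact le_colon.1 hab
    rcases hP.2 a (b • ⊤) h1 with h | h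
    · exact Or.inr (le_colon.2 h)
    · exact Or.inl (le_colon.2 h)

lemma aux_smul_prime (hcancel : ∀ a b : L, a • (⊤ : M) ≤ b • (⊤ : M) → a ≤ b)
    (hmul : IsMultiplicationModule L M) {p : L} (hp : IsPrimeL p) :
    IsPrimeM L (p • (⊤ : M)) := by
  constructor
  · refine lt_of_le_of_ne le_top fun h => ?_
    have h1 : (1 : L) • (⊤ : M) ≤ p • ⊤ := by rw [LatticeModule.one_smul, h]
    exact hp.1.not_ge (hcancel 1 p h1)
  · intro a X haX
    have hX : (colon L X ⊤) • (⊤ : M) = X := colon_top_smul hmul X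
    have h1 : (a * colon L X ⊤) • (⊤ : M) ≤ p • ⊤ := by
      rw [LatticeModule.mul_smul, hX]; exact haX
    rcases hp.2 a (colon L X ⊤) (hcancel _ _ h1) with h | h
    · exact Or.inr (aux_smul_mono_left h ⊤)
    · exact Or.inl (by rw [← hX]; exact aux_smul_mono_left h ⊤)

lemma aux_pow_le_prime {p : L} (hp : IsPrimeL p) {x : L} {n : ℕ} (hn : 0 < n)
    (h : x ^ n ≤ p) : x ≤ p := by
  induction n with
  | zero => exact absurd hn (lt_irrefl 0)
  | succ k ih =>
    rcases Nat.eq_zero_or_pos k with hk | hk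
    · subst hk; rwa [pow_one] at h
    · rw [pow_succ] at h
      rcases hp.2 _ _ h with h1 | h1
      · exact ih hk h1
      · exact h1

lemma aux_rad_mem {N : M} {x : L} {n : ℕ} (hn : 0 < n)
    (hxn : x ^ n ≤ colon L N ⊤) : x • (⊤ : M) ≤ mrad L N := by
  refine le_sInf fun P hP => ?_
  have hpp : IsPrimeL (colon L P ⊤) := aux_colon_prime hP.1
  have hqp : colon L N ⊤ ≤ colon L P ⊤ :=
    le_colon.2 (le_trans (colon_smul_le N ⊤) hP.2)
  exact le_colon.1 (aux_pow_le_prime hpp hn (le_trans hxn hqp))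

lemma aux_pow_compact {x : L} (hx : IsCompactElement x) (n : ℕ) :
    IsCompactElement (x ^ n) := by
  induction n with
  | zero =>
    rw [pow_zero, MultiplicativeLattice.one_eq_top]
    exact MultiplicativeLattice.top_compact
  | succ k ih =>
    rw [pow_succ]
    exact MultiplicativeLattice.mul_compact _ _ ih hx

lemma aux_exists_prime_avoid {q x : L} (hx : IsCompactElement x)
    (h : ∀ n : ℕ, 0 < n → ¬ x ^ n ≤ q) :
    ∃ p : L, IsPrimeL p ∧ q ≤ p ∧ ∀ n : ℕ, 0 < n → ¬ x ^ n ≤ p := by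
  obtain ⟨m, hqm, hmax⟩ := zorn_le_nonempty₀ {c : L | q ≤ c ∧ ∀ n : ℕ, 0 < n → ¬ x ^ n ≤ c}
    (fun c hcs hchain y hy => by
      refine ⟨sSup c, ⟨le_trans (hcs hy).1 (le_sSup hy), fun n hn hle => ?_⟩,
        fun z hz => le_sSup hz⟩
      obtain ⟨z, hzc, hz⟩ := (CompleteLattice.isCompactElement_iff_le_of_directed_sSup_le
        L (x ^ n)).1 (aux_pow_compact hx n) c ⟨y, hy⟩ hchain.directedOn hle
      exact (hcs hzc).2 n hn hz)
    q ⟨le_rfl, h⟩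
  have hm := hmax.prop
  refine ⟨m, ⟨?_, ?_⟩, hqm, hm.2⟩
  · refine lt_of_le_of_ne (aux_le_one _) fun h1 => ?_
    exact hm.2 1 one_pos (by rw [pow_one, h1]; exact aux_le_one x)
  · intro a b hab
    by_contra hcon
    push_neg at hcon
    have hstep : ∀ d : L, ¬ d ≤ m → ∃ n : ℕ, 0 < n ∧ x ^ n ≤ m ⊔ d := by
      intro d hd
      have : ¬ (m ⊔ d ∈ {c : L | q ≤ c ∧ ∀ n : ℕ, 0 < n → ¬ x ^ n ≤ c}) := by
        intro hmem
        exact hd (le_trans le_sup_right (hmax.2 hmem le_sup_left))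
      simp only [Set.mem_setOf_eq, not_and, not_forall, not_not] at this
      obtain ⟨n, hn, hle⟩ := this (le_trans hqm le_sup_left)
      exact ⟨n, hn, hle⟩
    obtain ⟨n, hn, hna⟩ := hstep a hcon.1
    obtain ⟨k, hk, hkb⟩ := hstep b hcon.2
    have hmul2 : (m ⊔ a) * (m ⊔ b) ≤ m := by
      rw [aux_mul_sup, mul_comm (m ⊔ a) b, aux_mul_sup, mul_comm b a]
      exact sup_le (aux_mul_le_right _ _) (sup_le (aux_mul_le_right _ _) hab)
    refine hm.2 (n + k) (Nat.add_pos_left hn k) ?_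
    rw [pow_add]
    exact le_trans (aux_mul_le_mul hna hkb) hmul2

lemma aux_r_le (hcancel : ∀ a b : L, a • (⊤ : M) ≤ b • (⊤ : M) → a ≤ b)
    (hmul : IsMultiplicationModule L M) {N : M} {p : L} (hp : IsPrimeL p)
    (hqp : colon L N ⊤ ≤ p) : colon L (mrad L N) ⊤ ≤ p := by
  have hPM : IsPrimeM L (p • (⊤ : M)) := aux_smul_prime hcancel hmul hp
  have hNP : N ≤ p • ⊤ := by
    conv_lhs => rw [← colon_top_smul hmul N]
    exact aux_smul_mono_left hqp ⊤
  have h1 : mrad L N ≤ p • ⊤ := sInf_le ⟨hPM, hNP⟩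
  exact hcancel _ _ (le_trans (colon_smul_le _ _) h1)

end PrimeLemmas
theorem stmt8 {L : Type u} {M : Type v} [MultiplicativeLattice L] [LatticeModule L M]
    (hPG : IsPGLattice L) (hfaith : IsFaithful L M)
    (hmul : IsMultiplicationModule L M) (hPGM : IsPGModule L M)
    (hcomp : IsCompactElement (⊤ : M))
    (N : M) (hN : IsPseudoPrimary L N) :
    IsPrimeM L (mrad L N) := by
  classical
  have hcancel : ∀ a b : L, a • (⊤ : M) ≤ b • (⊤ : M) → a ≤ b :=
    aux_cancel hfaith hmul hPGM hcomp
  obtain ⟨P₀, hP₀, hNP₀⟩ := aux_exists_prime (L := L) hcomp hN.1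
  have hmradlt : mrad L N < ⊤ := lt_of_le_of_lt (sInf_le ⟨hP₀, hNP₀⟩) hP₀.1
  set r : L := colon L (mrad L N) ⊤ with hrdef
  have hmr : r • (⊤ : M) = mrad L N := colon_top_smul hmul _
  have hrprime : IsPrimeL r := by
    constructor
    · refine lt_of_le_of_ne (aux_le_one _) fun h1 => ?_
      refine hmradlt.ne ?_
      rw [← hmr, h1, LatticeModule.one_smul]
    · intro a b hab
      by_cases hb : b ≤ r
      · exact Or.inr hb
      left
      -- pick a compact y ≤ b with y ≰ r
      have hby : ∃ y : L, IsCompactElement y ∧ y ≤ b ∧ ¬ y ≤ r := by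
        by_contra hcon
        push_neg at hcon
        refine hb ?_
        calc b = sSup {c : L | IsCompactElement c ∧ c ≤ b} :=
          MultiplicativeLattice.compactlyGenerated b
        _ ≤ r := sSup_le fun c hc => hcon c hc.1 hc.2
      obtain ⟨y, hyc, hyb, hyr⟩ := hby
      -- it suffices to bound every compact below a
      conv_lhs => rw [MultiplicativeLattice.compactlyGenerated a]
      refine sSup_le ?_
      rintro x ⟨hxc, hxa⟩
      have hxy : x * y ≤ r := le_trans (aux_mul_le_mul hxa hyb) hab
      -- (x*y) has a power below (N : ⊤)
      have hq : ∃ n : ℕ, 0 < n ∧ (x * y) ^ n ≤ colon L N ⊤ := by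
        by_contra hcon
        push_neg at hcon
        obtain ⟨p, hp, hqp, hpow⟩ := aux_exists_prime_avoid
          (MultiplicativeLattice.mul_compact _ _ hxc hyc) fun n hn => hcon n hn
        have hrp : r ≤ p := aux_r_le hcancel hmul hp hqp
        exact hpow 1 one_pos (by rw [pow_one]; exact le_trans hxy hrp)
      obtain ⟨n, hn, hpow⟩ := hq
      rw [mul_pow] at hpow
      have h1 : x ^ n • (y ^ n • (⊤ : M)) ≤ N := by
        rw [← LatticeModule.mul_smul]
        exact le_trans (aux_smul_mono_left hpow ⊤) (colon_smul_le N ⊤)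
      rcases hN.2 (x ^ n) (y ^ n • ⊤) h1 with h2 | h2
      · exact le_colon.2 (aux_rad_mem hn h2)
      · exfalso
        have hyn : y ^ n ≤ r := le_colon.2 h2
        have hym : ∃ m : ℕ, 0 < m ∧ y ^ m ≤ colon L N ⊤ := by
          by_contra hcon
          push_neg at hcon
          obtain ⟨p, hp, hqp, hpow'⟩ := aux_exists_prime_avoid hyc fun m hm => hcon m hm
          have hrp : r ≤ p := aux_r_le hcancel hmul hp hqp
          exact hpow' n hn (le_trans hyn hrp)
        obtain ⟨m, hm, hym⟩ := hym
        exact hyr (le_colon.2 (aux_rad_mem hm hym))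
  have hfin := aux_smul_prime hcancel hmul hrprime
  rwa [hmr] at hfin
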